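/- Let n̂, p̂, q̂ be C¹ orthonormal right-handed vector fields on an open set of ℝ³ satisfying the frame equations (p̂·∇)p̂ = β q̂ − (s/2 + Δ₁) n̂, (q̂·∇)q̂ = −(s/2 − Δ₁) n̂ − γ p̂, (p̂·∇)q̂ = −β p̂ − (t/2 + Δ₂) n̂, and (q̂·∇)p̂ = γ q̂ + (t/2 − Δ₂) n̂, with constant coefficients satisfying s = 2Δ₁, t = −2Δ₂, and β Δ₂ − γ Δ₁ = 0, where Δ² := Δ₁² + Δ₂² ≠ 0. Then the unit vector field P̂₂ = (Δ₂ p̂ − Δ₁ q̂)/Δ satisfies (P̂₂·∇)P̂₂ = 0, i.e., its integral curves are straight lines. -/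

import Mathlib

noncomputable section

abbrev E3 : Type := EuclideanSpace ℝ (Fin 3)

def e3 (a b c : ℝ) : E3 := (WithLp.equiv 2 (Fin 3 → ℝ)).symm ![a, b, c]

def dot3 (a b : E3) : ℝ := a 0 * b 0 + a 1 * b 1 + a 2 * b 2

def cross3 (a b : E3) : E3 :=
  e3 (a 1 * b 2 - a 2 * b 1) (a 2 * b 0 - a 0 * b 2) (a 0 * b 1 - a 1 * b 0)

def pd3 (i : Fin 3) (f : E3 → ℝ) (x : E3) : ℝ :=
  fderiv ℝ f x (EuclideanSpace.single i 1)

def grad3 (f : E3 → ℝ) (x : E3) : E3 := e3 (pd3 0 f x) (pd3 1 f x) (pd3 2 f x)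

def div3 (v : E3 → E3) (x : E3) : ℝ :=
  pd3 0 (fun y => v y 0) x + pd3 1 (fun y => v y 1) x + pd3 2 (fun y => v y 2) x

def curl3 (v : E3 → E3) (x : E3) : E3 :=
  e3 (pd3 1 (fun y => v y 2) x - pd3 2 (fun y => v y 1) x)
     (pd3 2 (fun y => v y 0) x - pd3 0 (fun y => v y 2) x)
     (pd3 0 (fun y => v y 1) x - pd3 1 (fun y => v y 0) x)

def dirD3 (a : E3) (v : E3 → E3) (x : E3) : E3 :=
  e3 (fderiv ℝ (fun y => v y 0) x a) (fderiv ℝ (fun y => v y 1) x a)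
     (fderiv ℝ (fun y => v y 2) x a)

lemma dirD3_apply (a : E3) (v : E3 → E3) (x : E3) (i : Fin 3) :
    dirD3 a v x i = fderiv ℝ (fun y => v y i) x a := by
  fin_cases i <;> rfl

lemma dirD3_eq_fderiv {v : E3 → E3} {x : E3} (hv : DifferentiableAt ℝ v x) (a : E3) :
    dirD3 a v x = fderiv ℝ v x a := by
  ext i
  rw [dirD3_apply]
  exact congrArg (· a) ((EuclideanSpace.proj i : E3 →L[ℝ] ℝ).hasFDerivAt.comp x
    hv.hasFDerivAt).fderiv

lemma dirD3_smul_add_smul_self {p q : E3 → E3} {x : E3} (hp : DifferentiableAt ℝ p x)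
    (hq : DifferentiableAt ℝ q x) (a b : ℝ) :
    dirD3 (a • p x + b • q x) (fun y => a • p y + b • q y) x =
      (a * a) • dirD3 (p x) p x + (a * b) • dirD3 (q x) p x +
        (b * a) • dirD3 (p x) q x + (b * b) • dirD3 (q x) q x := by
  have hw : HasFDerivAt (fun y => a • p y + b • q y) (a • fderiv ℝ p x + b • fderiv ℝ q x) x :=
    (hp.hasFDerivAt.const_smul a).add (hq.hasFDerivAt.const_smul b)
  simp only [dirD3_eq_fderiv hw.differentiableAt, hw.fderiv, dirD3_eq_fderiv hp,
    dirD3_eq_fderiv hq, add_apply, smul_apply, map_add, map_smul]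
  module

theorem stmt_17_general (U : Set E3) (n p q : E3 → E3)
    (hp : ∀ x ∈ U, DifferentiableAt ℝ p x)
    (hq : ∀ x ∈ U, DifferentiableAt ℝ q x)
    (s t Δ₁ Δ₂ β γ : ℝ)
    (hs : s = 2 * Δ₁) (ht : t = -2 * Δ₂) (hβγ : β * Δ₂ - γ * Δ₁ = 0)
    (hfr1 : ∀ x ∈ U, dirD3 (p x) p x = β • q x - (s / 2 + Δ₁) • n x)
    (hfr2 : ∀ x ∈ U, dirD3 (q x) q x = -(s / 2 - Δ₁) • n x - γ • p x)
    (hfr3 : ∀ x ∈ U, dirD3 (p x) q x = -β • p x - (t / 2 + Δ₂) • n x)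
    (hfr4 : ∀ x ∈ U, dirD3 (q x) p x = γ • q x + (t / 2 - Δ₂) • n x)
    (P₂ : E3 → E3)
    (hP₂ : P₂ = fun x => (Real.sqrt (Δ₁ ^ 2 + Δ₂ ^ 2))⁻¹ • (Δ₂ • p x - Δ₁ • q x)) :
    ∀ x ∈ U, dirD3 (P₂ x) P₂ x = 0 := by
  intro x hx
  set c := (Real.sqrt (Δ₁ ^ 2 + Δ₂ ^ 2))⁻¹
  have hP₂' : P₂ = fun y => (c * Δ₂) • p y + (-(c * Δ₁)) • q y := by
    rw [hP₂]
    funext y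
    module
  rw [hP₂', dirD3_smul_add_smul_self (hp x hx) (hq x hx), hfr1 x hx, hfr2 x hx, hfr3 x hx,
    hfr4 x hx, hs, ht]
  -- the `n̂`-terms cancel since `s = 2Δ₁`, `t = -2Δ₂`; the rest is `c²(βΔ₂ - γΔ₁)(Δ₁ p̂ + Δ₂ q̂)`
  linear_combination (norm := module) hβγ • (c ^ 2 • (Δ₁ • p x + Δ₂ • q x))

theorem stmt_17 (U : Set E3) (hU : IsOpen U) (n p q : E3 → E3)
    (hp : ∀ x ∈ U, DifferentiableAt ℝ p x)
    (hq : ∀ x ∈ U, DifferentiableAt ℝ q x)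
    (hnn : ∀ x ∈ U, dot3 (n x) (n x) = 1)
    (hpp : ∀ x ∈ U, dot3 (p x) (p x) = 1)
    (hqq : ∀ x ∈ U, dot3 (q x) (q x) = 1)
    (hnp : ∀ x ∈ U, dot3 (n x) (p x) = 0)
    (hnq : ∀ x ∈ U, dot3 (n x) (q x) = 0)
    (hpq : ∀ x ∈ U, dot3 (p x) (q x) = 0)
    (hright : ∀ x ∈ U, n x = cross3 (p x) (q x))
    (s t Δ₁ Δ₂ β γ : ℝ)
    (hΔ : Δ₁ ^ 2 + Δ₂ ^ 2 ≠ 0)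
    (hs : s = 2 * Δ₁) (ht : t = -2 * Δ₂) (hβγ : β * Δ₂ - γ * Δ₁ = 0)
    (hfr1 : ∀ x ∈ U, dirD3 (p x) p x = β • q x - (s / 2 + Δ₁) • n x)
    (hfr2 : ∀ x ∈ U, dirD3 (q x) q x = -(s / 2 - Δ₁) • n x - γ • p x)
    (hfr3 : ∀ x ∈ U, dirD3 (p x) q x = -β • p x - (t / 2 + Δ₂) • n x)
    (hfr4 : ∀ x ∈ U, dirD3 (q x) p x = γ • q x + (t / 2 - Δ₂) • n x)
    (P₂ : E3 → E3)
    (hP₂ : P₂ = fun x => (Real.sqrt (Δ₁ ^ 2 + Δ₂ ^ 2))⁻¹ • (Δ₂ • p x - Δ₁ • q x)) :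
    ∀ x ∈ U, dirD3 (P₂ x) P₂ x = 0 :=
  stmt_17_general U n p q hp hq s t Δ₁ Δ₂ β γ hs ht hβγ hfr1 hfr2 hfr3 hfr4 P₂ hP₂

end
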